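/- arXiv:2207.05564 — 3 statements merged into one kernel-verified Lean document; each statement's English description precedes it below -/
import Mathlib

section
/- The number of projective linear arrangements of a rooted tree T^r on n vertices equals the product over all vertices u of (d_out(u) + 1)!, where d_out(u) is the out-degree (number of children) of u. -/
open Finset

attribute [local instance] Classical.propDecidable

/-- An arrangement `π` of the vertices of `G` is planar if no two edges cross. -/
def IsPlanarArr {n : ℕ} (G : SimpleGraph (Fin n)) (π : Equiv.Perm (Fin n)) : Prop :=
  ∀ s t u v : Fin n, G.Adj s t → G.Adj u v →
    ¬ (π s < π u ∧ π u < π t ∧ π t < π v)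

/-- An arrangement of `G` rooted at `r` is projective if it is planar and no edge covers `r`. -/
def IsProjectiveArr {n : ℕ} (G : SimpleGraph (Fin n)) (r : Fin n) (π : Equiv.Perm (Fin n)) : Prop :=
  IsPlanarArr G π ∧ ∀ s t : Fin n, G.Adj s t → ¬ (π s < π r ∧ π r < π t)

/-- The set of vertices of the subtree rooted at `u` when `G` is rooted at `r`. -/
noncomputable def subtreeFinset {n : ℕ} (G : SimpleGraph (Fin n)) (r u : Fin n) : Finset (Fin n) :=
  univ.filter (fun v => G.dist r v = G.dist r u + G.dist u v)

/-- Directional size `s_r(u)`: size of the subtree rooted at `u` when `G` is rooted at `r`. -/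
noncomputable def subtreeSize {n : ℕ} (G : SimpleGraph (Fin n)) (r u : Fin n) : ℕ :=
  (subtreeFinset G r u).card

/-- Out-degree (number of children) of `u` in `G` rooted at `r`. -/
noncomputable def outDeg {n : ℕ} (G : SimpleGraph (Fin n)) (r u : Fin n) : ℕ :=
  (univ.filter (fun v => G.Adj u v ∧ G.dist r v = G.dist r u + 1)).card

/-- The sum of edge lengths of `G` in the arrangement `π`. -/
noncomputable def Dsum {n : ℕ} (G : SimpleGraph (Fin n)) (π : Equiv.Perm (Fin n)) : ℤ :=
  ∑ e ∈ G.edgeFinset,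
    Sym2.lift ⟨fun u v => |((π u : ℕ) : ℤ) - ((π v : ℕ) : ℤ)|,
      fun u v => abs_sub_comm _ _⟩ e

/-- The set of planar arrangements of `G`. -/
noncomputable def planarSet {n : ℕ} (G : SimpleGraph (Fin n)) : Finset (Equiv.Perm (Fin n)) :=
  univ.filter (IsPlanarArr G)

/-- The set of projective arrangements of `G` rooted at `r`. -/
noncomputable def projSet {n : ℕ} (G : SimpleGraph (Fin n)) (r : Fin n) :
    Finset (Equiv.Perm (Fin n)) :=
  univ.filter (IsProjectiveArr G r)

/-- The set of projective arrangements of `G` rooted at `r` with `r` in the first position. -/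
noncomputable def projSet1 {n : ℕ} (G : SimpleGraph (Fin n)) (r : Fin n) :
    Finset (Equiv.Perm (Fin n)) :=
  univ.filter (fun π => IsProjectiveArr G r π ∧ (π r : ℕ) = 0)

/-!
A rooted-tree arrangement is projective exactly when every subtree occupies an interval of
positions. Such an arrangement is determined by the relative order, for each vertex `u`, of the
block formed by `u` and its children: two vertices are compared at their deepest common
ancestor, through the blocks' members containing them. Conversely every family of block orders
arises, by sorting the vertices lexicographically by the ranks met along their root paths. So
projective arrangements correspond to families of block orders, which number
`∏ (d_out(u) + 1)!`.
-/

theorem Equiv.eq_of_lt_iff_lt {α : Type*} {m : ℕ} (e₁ e₂ : α ≃ Fin m)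
    (h : ∀ a b, e₁ a < e₁ b ↔ e₂ a < e₂ b) : e₁ = e₂ := by
  have hmono : StrictMono (e₁.symm.trans e₂) := fun i j hij => by
    simpa [← h] using hij
  have hid : ⇑(e₁.symm.trans e₂) = id := (hmono.range_inj strictMono_id).mp <| by
    rw [(e₁.symm.trans e₂).surjective.range_eq, Set.range_id]
  refine Equiv.ext fun a => ?_
  simpa using (congrFun hid (e₁ a)).symm

noncomputable def rankEquiv {α β : Type*} [Fintype α] [LinearOrder β] (k : α → β)
    (hk : Function.Injective k) {m : ℕ} (h : Fintype.card α = m) : α ≃ Fin m :=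
  letI := LinearOrder.lift' k hk
  (Fintype.orderIsoFinOfCardEq α h).symm.toEquiv

theorem rankEquiv_lt_rankEquiv_iff {α β : Type*} [Fintype α] [LinearOrder β] {k : α → β}
    (hk : Function.Injective k) {m : ℕ} (h : Fintype.card α = m) {a b : α} :
    rankEquiv k hk h a < rankEquiv k hk h b ↔ k a < k b :=
  letI := LinearOrder.lift' k hk
  (Fintype.orderIsoFinOfCardEq α h).symm.lt_iff_lt

theorem List.IsPrefix.of_lt_of_lt {α : Type*} [LinearOrder α] :
    ∀ {p l₁ l₂ l₃ : List α}, p <+: l₁ → p <+: l₃ → l₁ < l₂ → l₂ < l₃ → p <+: l₂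
  | [], _, _, _, _, _, _, _ => List.nil_prefix
  | a :: p, _ :: l₁, l₂, _ :: l₃, hp₁, hp₃, h₁₂, h₂₃ => by
    obtain ⟨rfl, h₁⟩ := List.cons_prefix_cons.mp hp₁
    obtain ⟨rfl, h₃⟩ := List.cons_prefix_cons.mp hp₃
    cases l₂ with
    | nil => exact absurd h₁₂ (List.not_lt_nil _)
    | cons b l₂ =>
      rw [List.cons_lt_cons_iff] at h₁₂ h₂₃
      rw [List.cons_prefix_cons]
      rcases h₁₂ with h | ⟨rfl, h₁₂⟩ <;> rcases h₂₃ with h' | ⟨hb, h₂₃⟩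
      · exact absurd (h.trans h') (lt_irrefl _)
      · exact absurd (hb ▸ h) (lt_irrefl _)
      · exact absurd h' (lt_irrefl _)
      · exact ⟨rfl, List.IsPrefix.of_lt_of_lt h₁ h₃ h₁₂ h₂₃⟩

namespace SimpleGraph

variable {V : Type*} {G : SimpleGraph V} {u v w : V}

lemma Walk.dist_add_dist_of_mem_support {p : G.Walk u v} (hp : p.length = G.dist u v)
    (hw : w ∈ p.support) : G.dist u w + G.dist w v = G.dist u v := by
  have hsplit := congrArg Walk.length (p.take_spec hw)
  rw [Walk.length_append] at hsplit
  have h₁ := G.dist_le (p.takeUntil w hw)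
  have h₂ := G.dist_le (p.dropUntil w hw)
  have h₃ := (p.takeUntil w hw).reachable.dist_triangle_left v
  omega

lemma Connected.exists_adj_dist_add_one_eq (hG : G.Connected) (huv : u ≠ v) :
    ∃ w, G.Adj u w ∧ G.dist w v + 1 = G.dist u v := by
  obtain ⟨p, hp⟩ := hG.exists_walk_length_eq_dist u v
  cases p with
  | nil => exact absurd rfl huv
  | @cons _ w _ hadj q =>
    refine ⟨w, hadj, le_antisymm ?_ ?_⟩
    · have := G.dist_le q
      rw [Walk.length_cons] at hp
      omega
    · have := hadj.reachable.dist_triangle_left v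
      rw [dist_eq_one_iff_adj.mpr hadj] at this
      omega

end SimpleGraph

namespace RootedTree

open SimpleGraph

variable {n : ℕ} {G : SimpleGraph (Fin n)} {r u v w a b c p s t x y z x' y' : Fin n}
  {π π' : Equiv.Perm (Fin n)} {S S' : Finset (Fin n)}

noncomputable def children (G : SimpleGraph (Fin n)) (r u : Fin n) : Finset (Fin n) :=
  univ.filter (fun v => G.Adj u v ∧ G.dist r v = G.dist r u + 1)

lemma mem_children : v ∈ children G r u ↔ G.Adj u v ∧ G.dist r v = G.dist r u + 1 := by
  simp [children]

lemma mem_subtreeFinset : v ∈ subtreeFinset G r u ↔ G.dist r v = G.dist r u + G.dist u v := by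
  simp [subtreeFinset]

lemma mem_subtreeFinset_self (u : Fin n) : u ∈ subtreeFinset G r u := by
  simp [mem_subtreeFinset]

lemma mem_subtreeFinset_root (v : Fin n) : v ∈ subtreeFinset G r r := by
  simp [mem_subtreeFinset]

lemma dist_le_of_mem_subtreeFinset (h : v ∈ subtreeFinset G r u) : G.dist r u ≤ G.dist r v := by
  rw [mem_subtreeFinset] at h
  omega

lemma dist_lt_of_mem_children (h : v ∈ children G r u) : G.dist r u < G.dist r v := by
  rw [mem_children] at h
  omega

lemma ne_of_mem_children (h : v ∈ children G r u) : v ≠ u := by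
  rintro rfl
  exact lt_irrefl _ (dist_lt_of_mem_children h)

lemma notMem_subtreeFinset_of_mem_children (h : v ∈ children G r u) :
    u ∉ subtreeFinset G r v := fun hu =>
  (dist_lt_of_mem_children h).not_ge (dist_le_of_mem_subtreeFinset hu)

lemma eq_of_mem_subtreeFinset_of_dist_le (hG : G.Connected) (h : v ∈ subtreeFinset G r u)
    (hd : G.dist r v ≤ G.dist r u) : v = u := by
  rw [mem_subtreeFinset] at h
  exact (hG.dist_eq_zero_iff.mp (by omega : G.dist u v = 0)).symm

lemma eq_root_of_root_mem_subtreeFinset (hG : G.Connected) (h : r ∈ subtreeFinset G r u) :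
    u = r :=
  (eq_of_mem_subtreeFinset_of_dist_le hG h (by simp)).symm

lemma mem_subtreeFinset_of_mem_children (hG : G.Connected) (hu : u ∈ subtreeFinset G r c)
    (hv : v ∈ children G r u) : v ∈ subtreeFinset G r c := by
  rw [mem_subtreeFinset] at hu ⊢
  rw [mem_children] at hv
  have h₁ := hG.dist_triangle (u := r) (v := c) (w := v)
  have h₂ := hG.dist_triangle (u := c) (v := u) (w := v)
  rw [dist_eq_one_iff_adj.mpr hv.1] at h₂
  omega

lemma children_subset_subtreeFinset (hG : G.Connected) (u : Fin n) :
    children G r u ⊆ subtreeFinset G r u :=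
  fun _ hc => mem_subtreeFinset_of_mem_children hG (mem_subtreeFinset_self u) hc

lemma exists_mem_children_of_mem_subtreeFinset (hG : G.Connected) (hx : x ∈ subtreeFinset G r u)
    (hne : x ≠ u) : ∃ c ∈ children G r u, x ∈ subtreeFinset G r c := by
  obtain ⟨c, hadj, hc⟩ := hG.exists_adj_dist_add_one_eq hne.symm
  rw [mem_subtreeFinset] at hx
  have h₁ := hG.dist_triangle (u := r) (v := u) (w := c)
  have h₂ := hG.dist_triangle (u := r) (v := c) (w := x)
  rw [dist_eq_one_iff_adj.mpr hadj] at h₁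
  exact ⟨c, mem_children.mpr ⟨hadj, by omega⟩, mem_subtreeFinset.mpr (by omega)⟩

lemma exists_mem_children (hG : G.Connected) (hx : x ≠ r) : ∃ u, x ∈ children G r u := by
  obtain ⟨u, hadj, hu⟩ := hG.exists_adj_dist_add_one_eq hx
  rw [dist_comm, dist_comm (u := x)] at hu
  exact ⟨u, mem_children.mpr ⟨hadj.symm, hu.symm⟩⟩

@[elab_as_elim]
lemma induction_on_children (hG : G.Connected) {P : Fin n → Prop} (root : P r)
    (child : ∀ u c, c ∈ children G r u → P u → P c) (x : Fin n) : P x := by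
  induction hd : G.dist r x using Nat.strong_induction_on generalizing x with
  | _ d ih =>
    by_cases hx : x = r
    · exact hx ▸ root
    · obtain ⟨u, hu⟩ := exists_mem_children hG hx
      exact child u x hu (ih _ (hd ▸ dist_lt_of_mem_children hu) u rfl)

lemma getVert_dist_eq_of_mem_subtreeFinset (hT : G.IsTree) {p : G.Walk r x} (hp : p.IsPath)
    (hx : x ∈ subtreeFinset G r u) : p.getVert (G.dist r u) = u := by
  obtain ⟨p₁, hp₁⟩ := hT.connected.exists_walk_length_eq_dist r u
  obtain ⟨p₂, hp₂⟩ := hT.connected.exists_walk_length_eq_dist u x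
  have hlen : (p₁.append p₂).length = G.dist r x := by
    rw [Walk.length_append, hp₁, hp₂, (mem_subtreeFinset.mp hx)]
  have : p₁.append p₂ = p := congrArg Subtype.val
    ((hT.isAcyclic.subsingleton_path r x).elim ⟨_, Walk.isPath_of_length_eq_dist _ hlen⟩ ⟨p, hp⟩)
  rw [← this, Walk.getVert_append, ← hp₁]
  simp

lemma eq_of_mem_subtreeFinset_of_dist_eq (hT : G.IsTree) (hu : x ∈ subtreeFinset G r u)
    (hv : x ∈ subtreeFinset G r v) (hd : G.dist r u = G.dist r v) : u = v := by
  obtain ⟨p, hp, -⟩ := hT.connected.exists_path_of_dist r x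
  rw [← getVert_dist_eq_of_mem_subtreeFinset hT hp hu,
    ← getVert_dist_eq_of_mem_subtreeFinset hT hp hv, hd]

lemma eq_of_mem_children (hT : G.IsTree) (hu : c ∈ children G r u) (hv : c ∈ children G r v) :
    u = v :=
  eq_of_mem_subtreeFinset_of_dist_eq hT (children_subset_subtreeFinset hT.connected u hu)
    (children_subset_subtreeFinset hT.connected v hv)
    (by have := (mem_children.mp hu).2; have := (mem_children.mp hv).2; omega)

lemma disjoint_subtreeFinset (hT : G.IsTree) (hc : c ∈ children G r u) (hd : x ∈ children G r u)
    (hne : c ≠ x) : Disjoint (subtreeFinset G r c) (subtreeFinset G r x) := by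
  refine Finset.disjoint_left.mpr fun y hyc hyx => hne ?_
  refine eq_of_mem_subtreeFinset_of_dist_eq hT hyc hyx ?_
  rw [(mem_children.mp hc).2, (mem_children.mp hd).2]

lemma mem_children_or_mem_children (hT : G.IsTree) (h : G.Adj u v) :
    v ∈ children G r u ∨ u ∈ children G r v := by
  rcases hT.dist_eq_dist_add_one_of_adj r h with hd | hd
  · exact Or.inr (mem_children.mpr ⟨h.symm, hd⟩)
  · exact Or.inl (mem_children.mpr ⟨h, hd⟩)

lemma eq_and_mem_children_of_adj_of_notMem (hT : G.IsTree) (hy : y ∈ subtreeFinset G r c)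
    (hyz : G.Adj y z) (hz : z ∉ subtreeFinset G r c) : y = c ∧ c ∈ children G r z := by
  rcases mem_children_or_mem_children (r := r) hT hyz with hzy | hyz'
  · exact absurd (mem_subtreeFinset_of_mem_children hT.connected hy hzy) hz
  by_cases hyc : y = c
  · exact ⟨hyc, hyc ▸ hyz'⟩
  obtain ⟨w, hadj, hw⟩ := hT.connected.exists_adj_dist_add_one_eq hyc
  have hw' : G.dist c w + 1 = G.dist c y := by rwa [dist_comm, dist_comm (u := c)]
  have hwy : G.dist w y = 1 := dist_eq_one_iff_adj.mpr hadj.symm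
  have h₁ := hT.connected.dist_triangle (u := r) (v := c) (w := w)
  have h₂ := hT.connected.dist_triangle (u := r) (v := w) (w := y)
  rw [mem_subtreeFinset] at hy
  have hwc : w ∈ subtreeFinset G r c := mem_subtreeFinset.mpr (by omega)
  have hyw : y ∈ children G r w := mem_children.mpr ⟨hadj.symm, by omega⟩
  exact absurd (eq_of_mem_children hT hyw hyz' ▸ hwc) hz

lemma mem_subtreeFinset_iff_of_mem_children (hT : G.IsTree) (hx : x ∈ children G r u) :
    x ∈ subtreeFinset G r c ↔ c = x ∨ u ∈ subtreeFinset G r c := by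
  refine ⟨fun h => ?_, ?_⟩
  · by_contra! h'
    exact h'.1 (eq_and_mem_children_of_adj_of_notMem hT h (mem_children.mp hx).1.symm h'.2).1.symm
  · rintro (rfl | h)
    exacts [mem_subtreeFinset_self c, mem_subtreeFinset_of_mem_children hT.connected h hx]

def IsContiguous (π : Equiv.Perm (Fin n)) (S : Finset (Fin n)) : Prop :=
  ∀ ⦃x y z⦄, x ∈ S → z ∈ S → π x < π y → π y < π z → y ∈ S

def SubtreesContiguous (G : SimpleGraph (Fin n)) (r : Fin n) (π : Equiv.Perm (Fin n)) : Prop :=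
  ∀ u, IsContiguous π (subtreeFinset G r u)

def Between (π : Equiv.Perm (Fin n)) (a y b : Fin n) : Prop :=
  π a < π y ∧ π y < π b ∨ π b < π y ∧ π y < π a

lemma Between.symm (h : Between π a y b) : Between π b y a := Or.symm h

lemma Between.ne_left (h : Between π a y b) : y ≠ a := by
  rintro rfl; unfold Between at h; omega

lemma Between.ne_right (h : Between π a y b) : y ≠ b := h.symm.ne_left

lemma IsContiguous.mem_of_between (hS : IsContiguous π S) (ha : a ∈ S) (hb : b ∈ S)
    (hy : Between π a y b) : y ∈ S := by
  rcases hy with ⟨h₁, h₂⟩ | ⟨h₁, h₂⟩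
  exacts [hS ha hb h₁ h₂, hS hb ha h₁ h₂]

lemma exists_walk_support_subset_subtreeFinset (hG : G.Connected)
    (hx : x ∈ subtreeFinset G r c) (hz : z ∈ subtreeFinset G r c) :
    ∃ q : G.Walk x z, ∀ v ∈ q.support, v ∈ subtreeFinset G r c := by
  have from_root : ∀ {x}, x ∈ subtreeFinset G r c →
      ∃ q : G.Walk c x, ∀ v ∈ q.support, v ∈ subtreeFinset G r c := fun {x} hx => by
    obtain ⟨q, hq⟩ := hG.exists_walk_length_eq_dist c x
    refine ⟨q, fun v hv => ?_⟩
    have h₁ := Walk.dist_add_dist_of_mem_support hq hv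
    have h₂ := hG.dist_triangle (u := r) (v := c) (w := v)
    have h₃ := hG.dist_triangle (u := r) (v := v) (w := x)
    rw [mem_subtreeFinset] at hx ⊢
    omega
  obtain ⟨qx, hqx⟩ := from_root hx
  obtain ⟨qz, hqz⟩ := from_root hz
  refine ⟨qx.reverse.append qz, fun v hv => ?_⟩
  rw [Walk.mem_support_append_iff, Walk.support_reverse, List.mem_reverse] at hv
  exact hv.elim (hqx v) (hqz v)

lemma exists_walk_support_disjoint_subtreeFinset (hG : G.Connected)
    (hy : y ∉ subtreeFinset G r c) :
    ∃ q : G.Walk y r, ∀ v ∈ q.support, v ∉ subtreeFinset G r c := by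
  obtain ⟨q, hq⟩ := hG.exists_walk_length_eq_dist r y
  refine ⟨q.reverse, fun v hv hvc => hy ?_⟩
  rw [Walk.support_reverse, List.mem_reverse] at hv
  have h₁ := Walk.dist_add_dist_of_mem_support hq hv
  have h₂ := hG.dist_triangle (u := r) (v := c) (w := y)
  have h₃ := hG.dist_triangle (u := c) (v := v) (w := y)
  rw [mem_subtreeFinset] at hvc ⊢
  omega

/-- If a subtree avoided the position of `y` while occupying positions on both sides, a walk
inside the subtree would have an edge `st` jumping over `y`, and the walk from `y` to the root,
which avoids the subtree, would either cross `st` or `st` would cover the root. -/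
lemma subtreesContiguous_of_isProjectiveArr (hG : G.Connected) (hπ : IsProjectiveArr G r π) :
    SubtreesContiguous G r π := by
  intro c x y z hx hz hxy hyz
  by_contra hy
  obtain ⟨q, hq⟩ := exists_walk_support_subset_subtreeFinset hG hx hz
  obtain ⟨⟨⟨s, t⟩, hst⟩, hd, hs, ht⟩ :=
    q.exists_boundary_dart {v | π v < π y} hxy (by simpa using hyz.le)
  have hsc := hq s (q.dart_fst_mem_support_of_mem_darts hd)
  have htc := hq t (q.dart_snd_mem_support_of_mem_darts hd)
  have hty : t ≠ y := by rintro rfl; exact hy htc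
  simp only [Set.mem_ofPred_eq, not_lt] at hs ht
  replace ht : π y < π t := lt_of_le_of_ne ht (π.injective.ne hty.symm)
  by_cases hr : π s < π r ∧ π r < π t
  · exact hπ.2 s t hst hr
  obtain ⟨q', hq'⟩ := exists_walk_support_disjoint_subtreeFinset hG hy
  obtain ⟨⟨⟨a, b⟩, hab⟩, hd', ha, hb⟩ :=
    q'.exists_boundary_dart {v | π s < π v ∧ π v < π t} ⟨hs, ht⟩ hr
  have hbc := hq' b (q'.dart_snd_mem_support_of_mem_darts hd')
  have hbs : π b ≠ π s := π.injective.ne fun h => hbc (h ▸ hsc)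
  have hbt : π b ≠ π t := π.injective.ne fun h => hbc (h ▸ htc)
  simp only [Set.mem_ofPred_eq] at ha hb
  rcases lt_or_gt_of_ne hbs with hbs | hbs
  · exact hπ.1 b a s t hab.symm hst ⟨hbs, ha⟩
  · exact hπ.1 s t a b hst hab ⟨ha.1, ha.2, by omega⟩

/-- `z` lies in the subtree of a child `c'` of `p`; for `c' ≠ c` that subtree would sit strictly
inside the span of `pc`, so the edge `zw` leaving it would have to end at `p`. -/
lemma mem_subtreeFinset_of_between (hT : G.IsTree) (hπ : SubtreesContiguous G r π)
    (hc : c ∈ children G r p) (hzw : G.Adj z w) (hz : Between π p z c) (hw : ¬Between π p w c)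
    (hwp : w ≠ p) (hwc : w ≠ c) :
    z ∈ subtreeFinset G r c ∧ w ∈ subtreeFinset G r c := by
  have hzp : z ∈ subtreeFinset G r p := (hπ p).mem_of_between (mem_subtreeFinset_self p)
    (children_subset_subtreeFinset hT.connected p hc) hz
  obtain ⟨c', hc', hzc'⟩ := exists_mem_children_of_mem_subtreeFinset hT.connected hzp hz.ne_left
  have hzc : z ∈ subtreeFinset G r c := by
    by_contra hzc
    have hcc' : c ≠ c' := fun h => hzc (h ▸ hzc')
    have hwc' : w ∉ subtreeFinset G r c' := by
      intro hwc'
      have hp := notMem_subtreeFinset_of_mem_children hc'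
      have hc : c ∉ subtreeFinset G r c' :=
        Finset.disjoint_left.mp (disjoint_subtreeFinset hT hc hc' hcc') (mem_subtreeFinset_self c)
      have : Between π z p w ∨ Between π z c w := by
        have := π.injective.ne hwp
        have := π.injective.ne hwc
        unfold Between at *
        omega
      rcases this with h | h
      exacts [hp ((hπ c').mem_of_between hzc' hwc' h), hc ((hπ c').mem_of_between hzc' hwc' h)]
    exact hwp (eq_of_mem_children hT (eq_and_mem_children_of_adj_of_notMem hT hzc' hzw hwc').2 hc')
  refine ⟨hzc, by_contra fun hwc' => ?_⟩
  exact hz.ne_right (eq_and_mem_children_of_adj_of_notMem hT hzc hzw hwc').1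

lemma min_dist_lt_of_between (hT : G.IsTree) (hπ : SubtreesContiguous G r π) (hst : G.Adj s t)
    (hzw : G.Adj z w) (hz : Between π s z t) (hw : ¬Between π s w t) (hws : w ≠ s) (hwt : w ≠ t) :
    min (G.dist r s) (G.dist r t) < min (G.dist r z) (G.dist r w) := by
  rcases mem_children_or_mem_children (r := r) hT hst with h | h
  · obtain ⟨hz', hw'⟩ := mem_subtreeFinset_of_between hT hπ h hzw hz hw hws hwt
    have := dist_lt_of_mem_children h
    have := dist_le_of_mem_subtreeFinset hz'
    have := dist_le_of_mem_subtreeFinset hw'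
    omega
  · obtain ⟨hz', hw'⟩ := mem_subtreeFinset_of_between hT hπ h hzw hz.symm
      (fun h' => hw h'.symm) hwt hws
    have := dist_lt_of_mem_children h
    have := dist_le_of_mem_subtreeFinset hz'
    have := dist_le_of_mem_subtreeFinset hw'
    omega

lemma isProjectiveArr_of_subtreesContiguous (hT : G.IsTree) (hπ : SubtreesContiguous G r π) :
    IsProjectiveArr G r π := by
  constructor
  · rintro s t u v hst huv ⟨h₁, h₂, h₃⟩
    -- each of two crossing edges would lie strictly deeper than the other
    have := min_dist_lt_of_between hT hπ hst huv (Or.inl ⟨h₁, h₂⟩) (by unfold Between; omega)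
      (by rintro rfl; omega) (by rintro rfl; omega)
    have := min_dist_lt_of_between hT hπ huv hst.symm (Or.inl ⟨h₂, h₃⟩) (by unfold Between; omega)
      (by rintro rfl; omega) (by rintro rfl; omega)
    omega
  · rintro s t hst ⟨h₁, h₂⟩
    have hr : ∀ p c, c ∈ children G r p → Between π p r c → False := fun p c hc h =>
      h.ne_left (eq_root_of_root_mem_subtreeFinset hT.connected ((hπ p).mem_of_between
        (mem_subtreeFinset_self p) (children_subset_subtreeFinset hT.connected p hc) h)).symm
    rcases mem_children_or_mem_children (r := r) hT hst with h | h
    exacts [hr s t h (Or.inl ⟨h₁, h₂⟩), hr t s h (Or.inr ⟨h₁, h₂⟩)]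

theorem isProjectiveArr_iff_subtreesContiguous (hT : G.IsTree) :
    IsProjectiveArr G r π ↔ SubtreesContiguous G r π :=
  ⟨subtreesContiguous_of_isProjectiveArr hT.connected, isProjectiveArr_of_subtreesContiguous hT⟩

lemma IsContiguous.lt_of_disjoint (hS : IsContiguous π S) (hS' : IsContiguous π S')
    (hdisj : Disjoint S S') (hx : x ∈ S) (hy : y ∈ S') (hx' : x' ∈ S) (hy' : y' ∈ S')
    (h : π x < π y) : π x' < π y' := by
  have hne : ∀ {v}, v ∈ S → v ∈ S' → False := fun hv hv' => Finset.disjoint_left.mp hdisj hv hv'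
  by_contra h'
  replace h' : π y' < π x' :=
    lt_of_le_of_ne (not_lt.mp h') (π.injective.ne fun e => hne hx' (e ▸ hy'))
  rcases lt_trichotomy (π x') (π y) with h'' | h'' | h''
  · exact hne hx' (hS' hy' hy h' h'')
  · exact hne hx' (π.injective h'' ▸ hy)
  · exact hne (hS hx hx' h h'') hy

noncomputable def block (G : SimpleGraph (Fin n)) (r u : Fin n) : Finset (Fin n) :=
  insert u (children G r u)

lemma card_block (u : Fin n) : #(block G r u) = outDeg G r u + 1 :=
  card_insert_of_notMem fun h => ne_of_mem_children h rfl

/-- The parts of the subtree of `u`, indexed by `block G r u`. -/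
noncomputable def branch (G : SimpleGraph (Fin n)) (r u x : Fin n) : Finset (Fin n) :=
  if x = u then {u} else subtreeFinset G r x

lemma branch_self (u : Fin n) : branch G r u u = {u} := if_pos rfl

lemma branch_of_ne (h : x ≠ u) : branch G r u x = subtreeFinset G r x := if_neg h

lemma mem_branch_self (u x : Fin n) : x ∈ branch G r u x := by
  unfold branch
  split_ifs with h
  exacts [h ▸ mem_singleton_self x, mem_subtreeFinset_self x]

lemma isContiguous_branch (hπ : SubtreesContiguous G r π) (u x : Fin n) :
    IsContiguous π (branch G r u x) := by
  unfold branch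
  split_ifs
  · intro a b c ha hc h₁ h₂
    rw [mem_singleton] at ha hc
    subst ha hc
    exact absurd (h₁.trans h₂) (lt_irrefl _)
  · exact hπ x

lemma disjoint_branch (hT : G.IsTree) (hx : x ∈ block G r u) (hy : y ∈ block G r u)
    (hne : x ≠ y) : Disjoint (branch G r u x) (branch G r u y) := by
  rcases mem_insert.mp hx with rfl | hx <;> rcases mem_insert.mp hy with rfl | hy
  · exact absurd rfl hne
  · rw [branch_self, branch_of_ne (ne_of_mem_children hy), disjoint_singleton_left]
    exact notMem_subtreeFinset_of_mem_children hy
  · rw [branch_self, branch_of_ne (ne_of_mem_children hx), disjoint_singleton_right]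
    exact notMem_subtreeFinset_of_mem_children hx
  · rw [branch_of_ne (ne_of_mem_children hx), branch_of_ne (ne_of_mem_children hy)]
    exact disjoint_subtreeFinset hT hx hy hne

lemma exists_mem_branch (hG : G.Connected) (ha : a ∈ subtreeFinset G r u) :
    ∃ x ∈ block G r u, a ∈ branch G r u x := by
  by_cases hau : a = u
  · exact ⟨u, mem_insert_self u _, hau ▸ mem_branch_self a a⟩
  · obtain ⟨c, hc, hac⟩ := exists_mem_children_of_mem_subtreeFinset hG ha hau
    refine ⟨c, mem_insert_of_mem hc, ?_⟩
    rwa [branch_of_ne (ne_of_mem_children hc)]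

/-- Separation at the deepest common ancestor `u` of `a` and `b`. -/
lemma exists_separating_block (hT : G.IsTree) (hab : a ≠ b) :
    ∃ u, ∃ x ∈ block G r u, ∃ y ∈ block G r u,
      x ≠ y ∧ a ∈ branch G r u x ∧ b ∈ branch G r u y := by
  obtain ⟨u, hu, hmax⟩ :=
    (univ.filter fun w => a ∈ subtreeFinset G r w ∧ b ∈ subtreeFinset G r w).exists_max_image
      (G.dist r ·) ⟨r, by simp [mem_subtreeFinset_root]⟩
  simp only [mem_filter, mem_univ, true_and] at hu hmax
  obtain ⟨x, hx, hax⟩ := exists_mem_branch hT.connected hu.1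
  obtain ⟨y, hy, hby⟩ := exists_mem_branch hT.connected hu.2
  refine ⟨u, x, hx, y, hy, ?_, hax, hby⟩
  rintro rfl
  by_cases hxu : x = u
  · rw [hxu, branch_self, mem_singleton] at hax hby
    exact hab (hax.trans hby.symm)
  · rw [branch_of_ne hxu] at hax hby
    exact (hmax x ⟨hax, hby⟩).not_gt (dist_lt_of_mem_children ((mem_insert.mp hx).resolve_left hxu))

lemma lt_of_lt_of_forall_block (hT : G.IsTree) (hπ : SubtreesContiguous G r π)
    (hπ' : SubtreesContiguous G r π')
    (h : ∀ u, ∀ x ∈ block G r u, ∀ y ∈ block G r u, π x < π y → π' x < π' y)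
    (hab : π a < π b) : π' a < π' b := by
  obtain ⟨u, x, hx, y, hy, hxy, ha, hb⟩ :=
    exists_separating_block (r := r) hT (ne_of_apply_ne π hab.ne)
  have hdisj := disjoint_branch hT hx hy hxy
  have := (isContiguous_branch hπ u x).lt_of_disjoint (isContiguous_branch hπ u y) hdisj ha hb
    (mem_branch_self u x) (mem_branch_self u y) hab
  exact (isContiguous_branch hπ' u x).lt_of_disjoint (isContiguous_branch hπ' u y) hdisj
    (mem_branch_self u x) (mem_branch_self u y) ha hb (h u x hx y hy this)

/-- A linear order of every block, given by the ranks of its elements. -/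
abbrev LocalOrders (G : SimpleGraph (Fin n)) (r : Fin n) : Type :=
  ∀ u : Fin n, block G r u ≃ Fin #(block G r u)

lemma card_localOrders :
    Fintype.card (LocalOrders G r) = ∏ u : Fin n, (outDeg G r u + 1).factorial := by
  rw [Fintype.card_pi]
  refine prod_congr rfl fun u _ => ?_
  rw [Fintype.card_equiv (Fintype.equivFinOfCardEq (Fintype.card_coe _)), Fintype.card_coe,
    card_block]

noncomputable def localOrders (G : SimpleGraph (Fin n)) (r : Fin n) (π : Equiv.Perm (Fin n)) :
    LocalOrders G r :=
  fun u => rankEquiv (fun x : block G r u => π x) (π.injective.comp Subtype.val_injective)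
    (Fintype.card_coe _)

lemma localOrders_lt_localOrders_iff {x y : block G r u} :
    localOrders G r π u x < localOrders G r π u y ↔ π x < π y :=
  rankEquiv_lt_rankEquiv_iff _ _

lemma injOn_localOrders (hT : G.IsTree) :
    Set.InjOn (localOrders G r) {π | SubtreesContiguous G r π} := by
  intro π hπ π' hπ' h
  have hblock : ∀ {π π' : Equiv.Perm (Fin n)}, localOrders G r π = localOrders G r π' →
      ∀ u, ∀ x ∈ block G r u, ∀ y ∈ block G r u, π x < π y → π' x < π' y :=
    fun h u x hx y hy hxy => by
      simpa [← localOrders_lt_localOrders_iff (x := ⟨x, hx⟩) (y := ⟨y, hy⟩), h] using hxy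
  exact Equiv.eq_of_lt_iff_lt π π' fun a b =>
    ⟨lt_of_lt_of_forall_block hT hπ hπ' (hblock h),
      lt_of_lt_of_forall_block hT hπ' hπ (hblock h.symm)⟩

section LocalOrderRealization

variable (σ : LocalOrders G r)

/-- The rank of `x` in `σ u`, with junk value `0` outside `block G r u`. -/
noncomputable def rank (u x : Fin n) : ℕ :=
  if h : x ∈ block G r u then σ u ⟨x, h⟩ else 0

lemma rank_lt_rank_iff (hx : x ∈ block G r u) (hy : y ∈ block G r u) :
    rank σ u x < rank σ u y ↔ σ u ⟨x, hx⟩ < σ u ⟨y, hy⟩ := by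
  rw [rank, rank, dif_pos hx, dif_pos hy, Fin.lt_def]

lemma eq_of_rank_eq (hx : x ∈ block G r u) (hy : y ∈ block G r u)
    (h : rank σ u x = rank σ u y) : x = y := by
  rw [rank, rank, dif_pos hx, dif_pos hy] at h
  simpa using (σ u).injective (Fin.val_injective h)

/-- The ranks met along the path from the root to `x`, each taken in the block of the parent. -/
noncomputable def pathRanks (x : Fin n) : List ℕ :=
  if h : ∃ u, x ∈ children G r u then pathRanks h.choose ++ [rank σ h.choose x] else []
termination_by G.dist r x
decreasing_by exact dist_lt_of_mem_children h.choose_spec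

lemma pathRanks_root : pathRanks σ r = [] := by
  rw [pathRanks, dif_neg]
  rintro ⟨u, hu⟩
  exact absurd (dist_lt_of_mem_children hu) (by simp)

lemma pathRanks_of_mem_children (hT : G.IsTree) (hc : c ∈ children G r u) :
    pathRanks σ c = pathRanks σ u ++ [rank σ u c] := by
  have h : ∃ u, c ∈ children G r u := ⟨u, hc⟩
  rw [pathRanks, dif_pos h, eq_of_mem_children hT h.choose_spec hc]

lemma length_pathRanks (hT : G.IsTree) (x : Fin n) : (pathRanks σ x).length = G.dist r x := by
  induction x using induction_on_children (r := r) hT.connected with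
  | root => simp [pathRanks_root]
  | child u c hc ih => rw [pathRanks_of_mem_children σ hT hc, List.length_append, ih,
      (mem_children.mp hc).2, List.length_singleton]

lemma pathRanks_injective (hT : G.IsTree) : Function.Injective (pathRanks σ) := by
  intro x
  induction x using induction_on_children (r := r) hT.connected with
  | root =>
    intro y h
    have := length_pathRanks σ hT y
    rw [← h, pathRanks_root, List.length_nil, eq_comm, hT.connected.dist_eq_zero_iff] at this
    exact this
  | child u x hx ih =>
    intro y h
    by_cases hy : y = r
    · rw [hy, pathRanks_root, pathRanks_of_mem_children σ hT hx] at h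
      simp at h
    obtain ⟨v, hv⟩ := exists_mem_children hT.connected hy
    rw [pathRanks_of_mem_children σ hT hx, pathRanks_of_mem_children σ hT hv] at h
    obtain ⟨huv, hxy⟩ := List.append_inj' h rfl
    obtain rfl := ih huv
    exact eq_of_rank_eq σ (mem_insert_of_mem hx) (mem_insert_of_mem hv) (List.singleton_inj.mp hxy)

lemma pathRanks_prefix_pathRanks_iff (hT : G.IsTree) :
    pathRanks σ c <+: pathRanks σ x ↔ x ∈ subtreeFinset G r c := by
  induction x using induction_on_children (r := r) hT.connected with
  | root =>
    rw [pathRanks_root, List.prefix_nil, ← List.length_eq_zero_iff, length_pathRanks σ hT,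
      hT.connected.dist_eq_zero_iff]
    exact ⟨fun h => h ▸ mem_subtreeFinset_root r,
      fun h => (eq_root_of_root_mem_subtreeFinset hT.connected h).symm⟩
  | child u x hx ih =>
    rw [mem_subtreeFinset_iff_of_mem_children hT hx, ← ih, pathRanks_of_mem_children σ hT hx,
      List.prefix_concat_iff, ← pathRanks_of_mem_children σ hT hx,
      (pathRanks_injective σ hT).eq_iff]

/-- The last entry, the rank of `x` in its own block, places `x` among the subtrees of its
children. -/
noncomputable def lexKey (x : Fin n) : List ℕ :=
  pathRanks σ x ++ [rank σ x x]

lemma lexKey_injective (hT : G.IsTree) : Function.Injective (lexKey σ) :=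
  fun _ _ h => pathRanks_injective σ hT (List.append_inj' h rfl).1

lemma exists_lexKey_eq (hT : G.IsTree) (hx : x ∈ block G r u) :
    ∃ l, lexKey σ x = pathRanks σ u ++ rank σ u x :: l := by
  rcases mem_insert.mp hx with rfl | hx
  · exact ⟨[], rfl⟩
  · exact ⟨[rank σ x x], by simp [lexKey, pathRanks_of_mem_children σ hT hx]⟩

lemma lexKey_lt_lexKey_iff (hT : G.IsTree) (hx : x ∈ block G r u) (hy : y ∈ block G r u) :
    lexKey σ x < lexKey σ y ↔ rank σ u x < rank σ u y := by
  have key : ∀ {x y}, x ∈ block G r u → y ∈ block G r u → rank σ u x < rank σ u y →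
      lexKey σ x < lexKey σ y := fun hx hy h => by
    obtain ⟨l, hl⟩ := exists_lexKey_eq σ hT hx
    obtain ⟨l', hl'⟩ := exists_lexKey_eq σ hT hy
    rw [hl, hl']
    exact List.append_left_lt (List.cons_lt_cons_iff.mpr (Or.inl h))
  refine ⟨fun h => ?_, key hx hy⟩
  rcases lt_trichotomy (rank σ u x) (rank σ u y) with h' | h' | h'
  · exact h'
  · rw [eq_of_rank_eq σ hx hy h'] at h
    exact absurd h (lt_irrefl _)
  · exact absurd (key hy hx h') h.asymm

/-- The keys of a subtree are the lists extending the path of ranks of its root; those form an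
interval in the lexicographic order. -/
lemma mem_subtreeFinset_of_lexKey_lt_lt (hT : G.IsTree) (hx : x ∈ subtreeFinset G r c)
    (hz : z ∈ subtreeFinset G r c) (hxy : lexKey σ x < lexKey σ y) (hyz : lexKey σ y < lexKey σ z) :
    y ∈ subtreeFinset G r c := by
  have hx' : pathRanks σ c <+: lexKey σ x :=
    ((pathRanks_prefix_pathRanks_iff σ hT).mpr hx).trans (List.prefix_append _ _)
  have hz' : pathRanks σ c <+: lexKey σ z :=
    ((pathRanks_prefix_pathRanks_iff σ hT).mpr hz).trans (List.prefix_append _ _)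
  rcases List.prefix_concat_iff.mp (hx'.of_lt_of_lt hz' hxy hyz) with h | h
  · exact absurd hxy (List.not_lt.mpr (h ▸ hx').le)
  · exact (pathRanks_prefix_pathRanks_iff σ hT).mp h

noncomputable def ofLocalOrders (hT : G.IsTree) : Equiv.Perm (Fin n) :=
  rankEquiv (lexKey σ) (lexKey_injective σ hT) (Fintype.card_fin n)

lemma ofLocalOrders_lt_ofLocalOrders_iff (hT : G.IsTree) :
    ofLocalOrders σ hT x < ofLocalOrders σ hT y ↔ lexKey σ x < lexKey σ y :=
  rankEquiv_lt_rankEquiv_iff _ _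

lemma subtreesContiguous_ofLocalOrders (hT : G.IsTree) :
    SubtreesContiguous G r (ofLocalOrders σ hT) := fun _ _ _ _ hx hz hxy hyz =>
  mem_subtreeFinset_of_lexKey_lt_lt σ hT hx hz
    ((ofLocalOrders_lt_ofLocalOrders_iff σ hT).mp hxy)
    ((ofLocalOrders_lt_ofLocalOrders_iff σ hT).mp hyz)

lemma localOrders_ofLocalOrders (hT : G.IsTree) : localOrders G r (ofLocalOrders σ hT) = σ := by
  funext u
  refine Equiv.eq_of_lt_iff_lt _ _ fun x y => ?_
  rw [localOrders_lt_localOrders_iff, ofLocalOrders_lt_ofLocalOrders_iff,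
    lexKey_lt_lexKey_iff σ hT x.2 y.2, rank_lt_rank_iff σ x.2 y.2]

end LocalOrderRealization

end RootedTree

open RootedTree

/-- The number of projective arrangements of a rooted tree equals
`∏_u (d_out(u) + 1)!`. -/
theorem card_projSet (n : ℕ) (G : SimpleGraph (Fin n)) (hT : G.IsTree) (r : Fin n) :
    (projSet G r).card = ∏ u : Fin n, (outDeg G r u + 1).factorial := by
  have hmem : ∀ π, π ∈ projSet G r ↔ SubtreesContiguous G r π := fun π => by
    rw [projSet, mem_filter, isProjectiveArr_iff_subtreesContiguous hT]
    simp
  rw [← card_localOrders, ← card_univ]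
  refine card_bij' (fun π _ => localOrders G r π) (fun σ _ => ofLocalOrders σ hT)
    (fun _ _ => mem_univ _) (fun σ _ => (hmem _).mpr (subtreesContiguous_ofLocalOrders σ hT))
    (fun π hπ => ?_) (fun σ _ => localOrders_ofLocalOrders σ hT)
  exact injOn_localOrders hT (subtreesContiguous_ofLocalOrders _ hT) ((hmem π).mp hπ)
    (localOrders_ofLocalOrders _ hT)
end

section
/- The set of planar arrangements of a free tree T on n vertices is the disjoint union over vertices u of the sets of projective arrangements of T rooted at u with u placed at the first position; consequently |Pl(T)| = Σ_{u∈V} |Pr^1(T^u)|. -/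
open Finset

attribute [local instance] Classical.propDecidable

/-- The planar arrangements of a free tree are the disjoint union, over vertices `u`, of
the projective arrangements of `T^u` with `u` first; hence `|Pl(T)| = Σ_u |Pr¹(T^u)|`. -/
theorem planarSet_eq_disjiUnion (n : ℕ) (G : SimpleGraph (Fin n)) (hT : G.IsTree) :
    planarSet G = univ.biUnion (fun u => projSet1 G u) ∧
    (∀ u v : Fin n, u ≠ v → Disjoint (projSet1 G u) (projSet1 G v)) ∧
    (planarSet G).card = ∑ u : Fin n, (projSet1 G u).card := by
  have hpos : 0 < n := Fin.pos_iff_nonempty.mpr hT.isConnected.nonempty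
  have hdisj : ∀ u v : Fin n, u ≠ v → Disjoint (projSet1 G u) (projSet1 G v) := by
    intro u v huv
    rw [Finset.disjoint_left]
    intro π hu hv
    simp only [projSet1, mem_filter] at hu hv
    apply huv
    apply π.injective
    exact Fin.ext (hu.2.2.trans hv.2.2.symm)
  have heq : planarSet G = univ.biUnion (fun u => projSet1 G u) := by
    ext π
    simp only [planarSet, projSet1, mem_filter, mem_biUnion, mem_univ, true_and]
    constructor
    · intro h
      refine ⟨π.symm ⟨0, hpos⟩, ⟨h, ?_⟩, by simp⟩
      intro s t hst hc
      have : π (π.symm ⟨0, hpos⟩) = ⟨0, hpos⟩ := π.apply_symm_apply _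
      rw [this] at hc
      exact absurd hc.1 (by simp [Fin.lt_def])
    · rintro ⟨u, ⟨h, _⟩, _⟩
      exact h
  refine ⟨heq, hdisj, ?_⟩
  rw [heq, card_biUnion (fun u _ v _ h => hdisj u v h)]
end

section
/- For a free tree T on n vertices rooted at a vertex r, the ratio of the number of planar arrangements of T to the number of projective arrangements of T^r equals n / (deg(r) + 1); in particular the number of planar arrangements is at least the number of projective arrangements, with equality if and only if T is a star and r is its hub. -/
/-!
Rotating an arrangement cyclically preserves planarity, so the planar arrangements are `n` copies
of the planar arrangements with `r` in position `0`, and these are automatically projective.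
Moving `r` to the front of a projective arrangement gives such an arrangement `σ`, and `r` can be
put back into `σ` exactly at the cuts that no edge avoiding `r` passes over. In a planar `σ`
starting with `r`, each component of `T` with the edges at `r` deleted occupies an interval, so
these cuts are the right ends of the `deg r + 1` components. Hence both counts are multiples of
the number of planar arrangements starting with `r`, which is positive: listing the vertices in
the lexicographic order of their paths from `r` (a depth-first order) is such an arrangement.
-/

open Finset

attribute [local instance] Classical.propDecidable

section Rotation

variable {n : ℕ} {G : SimpleGraph (Fin n)} {π : Equiv.Perm (Fin n)}

theorem IsPlanarArr.trans_addRight_one {m : ℕ} {G : SimpleGraph (Fin (m + 1))}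
    {π : Equiv.Perm (Fin (m + 1))} (h : IsPlanarArr G π) :
    IsPlanarArr G (π.trans (Equiv.addRight 1)) := by
  intro s t u v hst huv hcross
  simp only [Equiv.trans_apply, Equiv.coe_addRight, Fin.lt_def, Fin.val_add_one, Fin.ext_iff,
    Fin.val_last] at hcross
  have := (π s).isLt; have := (π t).isLt; have := (π u).isLt; have := (π v).isLt
  by_cases hs : (π s : ℕ) = m
  · exact h u v t s huv hst.symm (by simp only [Fin.lt_def]; split_ifs at hcross <;> omega)
  · exact h s t u v hst huv (by simp only [Fin.lt_def]; split_ifs at hcross <;> omega)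

theorem IsPlanarArr.trans_addRight [NeZero n] (h : IsPlanarArr G π) (c : Fin n) :
    IsPlanarArr G (π.trans (Equiv.addRight c)) := by
  obtain ⟨m, rfl⟩ := Nat.exists_eq_succ_of_ne_zero (NeZero.ne n)
  induction c using Fin.induction with
  | zero => convert h; ext; simp
  | succ i ih =>
    rw [← Fin.coeSucc_eq_succ]
    convert ih.trans_addRight_one using 1
    ext x
    simp [add_assoc]

theorem isPlanarArr_trans_addRight_iff [NeZero n] (c : Fin n) :
    IsPlanarArr G (π.trans (Equiv.addRight c)) ↔ IsPlanarArr G π :=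
  ⟨fun h => by convert h.trans_addRight (-c); ext; simp, fun h => h.trans_addRight c⟩

end Rotation

section PlanarCount

variable {n : ℕ} {G : SimpleGraph (Fin n)} {r : Fin n} {π : Equiv.Perm (Fin n)}

theorem mem_projSet1_iff [NeZero n] : π ∈ projSet1 G r ↔ IsPlanarArr G π ∧ π r = 0 := by
  rw [projSet1, mem_filter]
  simp only [mem_univ, true_and, IsProjectiveArr, Fin.ext_iff, Fin.val_zero]
  refine ⟨fun ⟨⟨hp, _⟩, h0⟩ => ⟨hp, h0⟩,
    fun ⟨hp, h0⟩ => ⟨⟨hp, fun s t _ h => ?_⟩, h0⟩⟩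
  rw [Fin.lt_def, h0] at h
  exact Nat.not_lt_zero _ h.1

theorem card_planarSet [NeZero n] (r : Fin n) : #(planarSet G) = n * #(projSet1 G r) := by
  have hfiber (j : Fin n) : #{π ∈ planarSet G | π r = j} = #(projSet1 G r) := by
    refine card_nbij' (·.trans (Equiv.addRight (-j))) (·.trans (Equiv.addRight j))
      (fun π => ?_) (fun π => ?_) (fun π _ => ?_) (fun π _ => ?_)
    · simp +contextual [planarSet, mem_projSet1_iff, isPlanarArr_trans_addRight_iff]
    · simp +contextual [planarSet, mem_projSet1_iff, isPlanarArr_trans_addRight_iff]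
    all_goals ext; simp
  have hmaps : Set.MapsTo (fun π : Equiv.Perm (Fin n) => π r) (planarSet G)
      (univ : Finset (Fin n)) := fun _ _ => mem_coe.2 (mem_univ _)
  rw [card_eq_sum_card_fiberwise hmaps, sum_congr rfl fun j _ => hfiber j, sum_const, card_univ,
    Fintype.card_fin, smul_eq_mul]

end PlanarCount

section MoveToFront

variable {n : ℕ} {G : SimpleGraph (Fin n)} {r : Fin n} {π σ : Equiv.Perm (Fin n)}

theorem IsPlanarArr.of_agree_off
    (hagree : ∀ a b, a ≠ r → b ≠ r → (π a < π b ↔ σ a < σ b))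
    (hπ : ∀ s t, G.Adj s t → ¬(π s < π r ∧ π r < π t))
    (hσ : ∀ s t, G.Adj s t → ¬(σ s < σ r ∧ σ r < σ t)) (h : IsPlanarArr G σ) :
    IsPlanarArr G π := by
  rintro s t u v hst huv ⟨hsu, hut, htv⟩
  have hne {a b : Fin n} (hab : π a < π b) : a ≠ b := fun e => (e ▸ hab).false
  have hσne {a : Fin n} (ha : a ≠ r) : σ a ≠ σ r := σ.injective.ne ha
  have hur : u ≠ r := fun e => hπ s t hst ⟨e ▸ hsu, e ▸ hut⟩
  have htr : t ≠ r := fun e => hπ u v huv ⟨e ▸ hut, e ▸ htv⟩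
  -- `r` can only be the first or the last of the four endpoints, and since no edge of `σ` covers
  -- `r` either, it is the first or the last one in `σ` too: both give a crossing in `σ`
  by_cases hsr : s = r
  · subst hsr
    have hvr : v ≠ s := (hne (hsu.trans (hut.trans htv))).symm
    have hut' := (hagree u t hur htr).1 hut
    have htv' := (hagree t v htr hvr).1 htv
    rcases lt_or_gt_of_ne (hσne hur).symm with hsu' | hus'
    · exact h s t u v hst huv ⟨hsu', hut', htv'⟩
    · have hvs' : σ v < σ s :=
        lt_of_le_of_ne (not_lt.1 fun h' => hσ u v huv ⟨hus', h'⟩) (hσne hvr)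
      exact h u v t s huv hst.symm ⟨hut', htv', hvs'⟩
  by_cases hvr : v = r
  · subst hvr
    have hsu' := (hagree s u hsr hur).1 hsu
    have hut' := (hagree u t hur htr).1 hut
    rcases lt_or_gt_of_ne (hσne htr) with htv' | hvt'
    · exact h s t u v hst huv ⟨hsu', hut', htv'⟩
    · have hvs' : σ v < σ s :=
        lt_of_le_of_ne (not_lt.1 fun h' => hσ s t hst ⟨h', hvt'⟩) (hσne hsr).symm
      exact h v u s t huv.symm hst ⟨hvs', hsu', hut'⟩
  exact h s t u v hst huv ⟨(hagree s u hsr hur).1 hsu, (hagree u t hur htr).1 hut,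
    (hagree t v htr hvr).1 htv⟩

theorem Fin.coe_cycleRange (i j : Fin n) :
    (Fin.cycleRange i j : ℕ) =
      if (j : ℕ) < i then (j : ℕ) + 1 else if j = i then 0 else (j : ℕ) := by
  rcases lt_trichotomy j i with h | rfl | h
  · rw [Fin.coe_cycleRange_of_lt h, if_pos (Fin.lt_def.1 h)]
  · rw [Fin.coe_cycleRange_of_le le_rfl]
    simp
  · rw [Fin.cycleRange_of_gt h, if_neg (by omega), if_neg h.ne']

noncomputable def moveToFront (π : Equiv.Perm (Fin n)) (r : Fin n) : Equiv.Perm (Fin n) :=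
  π.trans (Fin.cycleRange (π r))

theorem coe_moveToFront_self : (moveToFront π r r : ℕ) = 0 := by
  simp [moveToFront, Fin.coe_cycleRange]

theorem coe_moveToFront_of_ne {a : Fin n} (ha : a ≠ r) :
    (moveToFront π r a : ℕ) =
      if (π a : ℕ) < π r then (π a : ℕ) + 1 else (π a : ℕ) := by
  simp [moveToFront, Fin.coe_cycleRange, π.injective.ne ha]

theorem moveToFront_lt_iff {a b : Fin n} (ha : a ≠ r) (hb : b ≠ r) :
    moveToFront π r a < moveToFront π r b ↔ π a < π b := by
  have : (π a : ℕ) ≠ π r := Fin.val_ne_of_ne (π.injective.ne ha)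
  have : (π b : ℕ) ≠ π r := Fin.val_ne_of_ne (π.injective.ne hb)
  rw [Fin.lt_def, Fin.lt_def, coe_moveToFront_of_ne ha, coe_moveToFront_of_ne hb]
  split_ifs <;> omega

end MoveToFront

section Gaps

variable {n : ℕ} {H : SimpleGraph (Fin n)} {σ : Equiv.Perm (Fin n)}

/-- `k` stands for the cut between positions `k` and `k + 1`. -/
def NoEdgeSpans (H : SimpleGraph (Fin n)) (σ : Equiv.Perm (Fin n)) (k : Fin n) : Prop :=
  ∀ s t, H.Adj s t → ¬(σ s ≤ k ∧ k < σ t)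

theorem noEdgeSpans_iff_forall_reachable_le
    (hinterval : ∀ u v w, σ u ≤ σ v → σ v ≤ σ w → H.Reachable u w → H.Reachable u v)
    {k : Fin n} :
    NoEdgeSpans H σ k ↔ ∀ v, H.Reachable (σ.symm k) v → σ v ≤ k := by
  refine ⟨fun h v ⟨p⟩ => ?_, fun h s t hst ⟨hs, ht⟩ => ?_⟩
  · by_contra hv
    obtain ⟨d, -, hd₁, hd₂⟩ := p.exists_boundary_dart {x | σ x ≤ k} (by simp) hv
    exact h _ _ d.adj ⟨hd₁, not_le.1 hd₂⟩
  · have hsk : H.Reachable s (σ.symm k) :=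
      hinterval s _ t (by simpa using hs) (by simpa using ht.le) hst.reachable
    exact (h t (hsk.symm.trans hst.reachable)).not_gt ht

theorem card_noEdgeSpans
    (hinterval : ∀ u v w, σ u ≤ σ v → σ v ≤ σ w → H.Reachable u w → H.Reachable u v) :
    #{k | NoEdgeSpans H σ k} = Nat.card H.ConnectedComponent := by
  rw [← Fintype.card_subtype, ← Nat.card_eq_fintype_card]
  refine Nat.card_eq_of_bijective (fun k => H.connectedComponentMk (σ.symm k.1)) ⟨?_, ?_⟩
  · rintro ⟨k₁, h₁⟩ ⟨k₂, h₂⟩ heq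
    have hreach := SimpleGraph.ConnectedComponent.exact heq
    rw [noEdgeSpans_iff_forall_reachable_le hinterval] at h₁ h₂
    exact Subtype.ext <|
      le_antisymm (by simpa using h₂ _ hreach.symm) (by simpa using h₁ _ hreach)
  · refine SimpleGraph.ConnectedComponent.ind fun u => ?_
    obtain ⟨v, huv, hmax⟩ := exists_max_image {v | H.Reachable u v} σ ⟨u, by simp⟩
    simp only [mem_filter, mem_univ, true_and] at huv hmax
    refine ⟨⟨σ v, ?_⟩, by simpa using (SimpleGraph.ConnectedComponent.sound huv).symm⟩
    rw [noEdgeSpans_iff_forall_reachable_le hinterval]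
    simpa using fun w hw => hmax w (huv.trans hw)

end Gaps

section Projective

variable {n : ℕ} {G : SimpleGraph (Fin n)} {r : Fin n} {π : Equiv.Perm (Fin n)}

theorem noEdgeSpans_moveToFront_iff :
    NoEdgeSpans (G.deleteIncidenceSet r) (moveToFront π r) (π r) ↔
      ∀ s t, G.Adj s t → ¬(π s < π r ∧ π r < π t) := by
  simp only [NoEdgeSpans, SimpleGraph.deleteIncidenceSet_adj, Fin.le_def, Fin.lt_def]
  refine ⟨fun h s t hst hcov => ?_, fun h s t ⟨hst, hs, ht⟩ hspan => h s t hst ?_⟩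
  · have hs : s ≠ r := fun e => (e ▸ hcov.1).false
    have ht : t ≠ r := fun e => (e ▸ hcov.2).false
    apply h s t ⟨hst, hs, ht⟩
    rw [coe_moveToFront_of_ne hs, coe_moveToFront_of_ne ht]
    split_ifs <;> omega
  · rw [coe_moveToFront_of_ne hs, coe_moveToFront_of_ne ht] at hspan
    have : (π s : ℕ) ≠ π r := Fin.val_ne_of_ne (π.injective.ne hs)
    split_ifs at hspan <;> omega

theorem isProjectiveArr_iff_moveToFront :
    IsProjectiveArr G r π ↔ IsPlanarArr G (moveToFront π r) ∧
      NoEdgeSpans (G.deleteIncidenceSet r) (moveToFront π r) (π r) := by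
  have hfront : ∀ s t, G.Adj s t →
      ¬(moveToFront π r s < moveToFront π r r ∧ moveToFront π r r < moveToFront π r t) :=
    fun s t _ h => by simp [Fin.lt_def, coe_moveToFront_self] at h
  rw [noEdgeSpans_moveToFront_iff, IsProjectiveArr]
  exact ⟨fun ⟨hp, hc⟩ => ⟨hp.of_agree_off (fun _ _ => moveToFront_lt_iff) hfront hc, hc⟩,
    fun ⟨hp, hc⟩ =>
      ⟨hp.of_agree_off (fun _ _ ha hb => (moveToFront_lt_iff ha hb).symm) hc hfront, hc⟩⟩

end Projective

section Intervals

open SimpleGraph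

variable {n : ℕ} {G : SimpleGraph (Fin n)} {r : Fin n} {σ : Equiv.Perm (Fin n)}

theorem reachable_deleteIncidenceSet_of_le_of_le (hG : G.Preconnected) (hp : IsPlanarArr G σ)
    (hr : ∀ v, σ r ≤ σ v) {u v w : Fin n} (huv : σ u ≤ σ v) (hvw : σ v ≤ σ w)
    (huw : (G.deleteIncidenceSet r).Reachable u w) : (G.deleteIncidenceSet r).Reachable u v := by
  set H := G.deleteIncidenceSet r
  rcases huv.eq_or_lt with huv | huv
  · rw [σ.injective huv]
  rcases hvw.eq_or_lt with hvw | hvw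
  · rwa [σ.injective hvw]
  obtain ⟨p⟩ := huw
  obtain ⟨⟨⟨x, y⟩, hxy⟩, hd, hx, hy⟩ :=
    p.exists_boundary_dart {z | σ z < σ v} huv (not_lt.2 hvw.le)
  simp only [Set.mem_ofPred_eq, not_lt] at hx hy
  have hux : H.Reachable u x := ⟨p.takeUntil x (p.dart_fst_mem_support_of_mem_darts hd)⟩
  have huy : H.Reachable u y := hux.trans hxy.reachable
  rcases hy.eq_or_lt with hvy | hvy
  · rwa [σ.injective hvy]
  obtain ⟨hxyG, hxr, hyr⟩ := deleteIncidenceSet_adj.1 hxy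
  by_contra huv'
  -- `x y` is an edge of `u`'s component passing over `v`, and `v`'s walk to `r` must cross it
  obtain ⟨q⟩ := hG v r
  obtain ⟨⟨⟨z₁, z₂⟩, hz⟩, -, hz₁, hz₂⟩ :=
    q.exists_boundary_dart {z | σ x < σ z ∧ σ z < σ y ∧ H.Reachable v z} ⟨hx, hvy, .rfl⟩
      fun h => (hr x).not_gt h.1
  simp only [Set.mem_ofPred_eq] at hz₁ hz₂
  have hz₁r : z₁ ≠ r := fun e => (hr x).not_gt (e ▸ hz₁.1)
  have hz₂' : z₂ ≠ x ∧ z₂ ≠ y ∧ ¬(σ x < σ z₂ ∧ σ z₂ < σ y) := by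
    by_cases hz₂r : z₂ = r
    · subst hz₂r
      exact ⟨hxr.symm, hyr.symm, fun h => (hr x).not_gt h.1⟩
    · have hvz₂ : H.Reachable v z₂ :=
        hz₁.2.2.trans (deleteIncidenceSet_adj.2 ⟨hz, hz₁r, hz₂r⟩).reachable
      refine ⟨?_, ?_, fun h => hz₂ ⟨h.1, h.2, hvz₂⟩⟩ <;> rintro rfl
      · exact huv' (hux.trans hvz₂.symm)
      · exact huv' (huy.trans hvz₂.symm)
  obtain ⟨hz₂x, hz₂y, hz₂out⟩ := hz₂'
  rcases lt_or_gt_of_ne (σ.injective.ne hz₂x) with hlt | hgt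
  · exact hp z₂ z₁ x y hz.symm hxyG ⟨hlt, hz₁.1, hz₁.2.1⟩
  · have hyz₂ : σ y < σ z₂ :=
      lt_of_le_of_ne (not_lt.1 fun h => hz₂out ⟨hgt, h⟩) (σ.injective.ne hz₂y).symm
    exact hp x y z₁ z₂ hxyG hz ⟨hz₁.1, hz₁.2.1, hyz₂⟩

end Intervals

namespace SimpleGraph

variable {V : Type*} {G : SimpleGraph V} {r : V}

theorem eq_of_reachable_deleteIncidenceSet {v : V} (h : (G.deleteIncidenceSet r).Reachable r v) :
    v = r := by
  obtain ⟨p⟩ := h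
  cases p with
  | nil => rfl
  | cons h _ => exact absurd rfl (deleteIncidenceSet_adj.1 h).2.1

theorem exists_adj_reachable_deleteIncidenceSet (hG : G.Preconnected) {v : V} (hv : v ≠ r) :
    ∃ c, G.Adj r c ∧ (G.deleteIncidenceSet r).Reachable v c := by
  obtain ⟨p⟩ := hG v r
  obtain ⟨⟨⟨z₁, z₂⟩, hz⟩, -, hz₁, hz₂⟩ :=
    p.exists_boundary_dart {z | (G.deleteIncidenceSet r).Reachable v z} .rfl
      fun h => hv (eq_of_reachable_deleteIncidenceSet (Set.mem_ofPred_eq ▸ h).symm)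
  simp only [Set.mem_ofPred_eq] at hz₁ hz₂
  have hz₁r : z₁ ≠ r := fun e => hv (eq_of_reachable_deleteIncidenceSet (e ▸ hz₁).symm)
  obtain rfl : z₂ = r := by
    by_contra hz₂r
    exact hz₂ (hz₁.trans (deleteIncidenceSet_adj.2 ⟨hz, hz₁r, hz₂r⟩).reachable)
  exact ⟨z₁, hz.symm, hz₁⟩

theorem IsAcyclic.eq_of_reachable_deleteIncidenceSet (hG : G.IsAcyclic) {c₁ c₂ : V}
    (h₁ : G.Adj r c₁) (h₂ : G.Adj r c₂) (h : (G.deleteIncidenceSet r).Reachable c₁ c₂) :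
    c₁ = c₂ := by
  by_contra hne
  have hle : G.deleteIncidenceSet r ≤ G.deleteEdges {s(r, c₁)} := fun a b hab => by
    obtain ⟨hab, ha, hb⟩ := deleteIncidenceSet_adj.1 hab
    exact deleteEdges_adj.2 ⟨hab, by simp [ha, hb]⟩
  have hrc₂ : (G.deleteEdges {s(r, c₁)}).Reachable r c₂ :=
    (deleteEdges_adj.2 ⟨h₂, by simp [Ne.symm hne, G.ne_of_adj h₁]⟩).reachable
  exact isAcyclic_iff_forall_adj_isBridge.1 hG h₁ (hrc₂.trans (h.symm.mono hle))

theorem IsTree.card_connectedComponent_deleteIncidenceSet [Fintype (G.neighborSet r)]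
    (hG : G.IsTree) : Nat.card (G.deleteIncidenceSet r).ConnectedComponent = G.degree r + 1 := by
  rw [← card_neighborSet_eq_degree, ← Fintype.card_option, ← Nat.card_eq_fintype_card]
  refine (Nat.card_eq_of_bijective (fun o => (G.deleteIncidenceSet r).connectedComponentMk
    (o.elim r Subtype.val)) ⟨?_, ?_⟩).symm
  · rintro (_ | ⟨c₁, h₁⟩) (_ | ⟨c₂, h₂⟩) heq <;>
      have h := ConnectedComponent.exact heq
    · rfl
    · exact absurd (eq_of_reachable_deleteIncidenceSet h) (G.ne_of_adj h₂).symm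
    · exact absurd (eq_of_reachable_deleteIncidenceSet h.symm) (G.ne_of_adj h₁).symm
    · exact congrArg _ (Subtype.ext (hG.isAcyclic.eq_of_reachable_deleteIncidenceSet h₁ h₂ h))
  · refine ConnectedComponent.ind fun v => ?_
    by_cases hv : v = r
    · exact ⟨none, by simp [hv]⟩
    · obtain ⟨c, hc, hvc⟩ :=
        exists_adj_reachable_deleteIncidenceSet hG.connected.preconnected hv
      exact ⟨some ⟨c, hc⟩, ConnectedComponent.sound hvc.symm⟩

end SimpleGraph

section ProjectiveCount

variable {n : ℕ} {G : SimpleGraph (Fin n)} {r : Fin n} {σ : Equiv.Perm (Fin n)}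

theorem mem_projSet {π : Equiv.Perm (Fin n)} : π ∈ projSet G r ↔ IsProjectiveArr G r π := by
  rw [projSet, mem_filter]
  exact and_iff_right (mem_univ _)

theorem card_moveToFront_fiber [NeZero n] (hσ : σ ∈ projSet1 G r) :
    #{π ∈ projSet G r | moveToFront π r = σ} =
      #{k | NoEdgeSpans (G.deleteIncidenceSet r) σ k} := by
  rw [mem_projSet1_iff] at hσ
  have hinsert (k : Fin n) : (σ.trans (Fin.cycleRange k).symm) r = k := by simp [hσ.2]
  have hfront (k : Fin n) : moveToFront (σ.trans (Fin.cycleRange k).symm) r = σ := by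
    ext
    simp [moveToFront, hinsert]
  refine card_nbij' (· r) (fun k => σ.trans (Fin.cycleRange k).symm) ?_ ?_ ?_ ?_
  · intro π hπ
    simp only [coe_filter, mem_projSet, Set.mem_ofPred_eq] at hπ ⊢
    obtain ⟨hπ, rfl⟩ := hπ
    exact ⟨mem_univ _, (isProjectiveArr_iff_moveToFront.1 hπ).2⟩
  · intro k hk
    simp only [coe_filter, mem_projSet, Set.mem_ofPred_eq, mem_univ, true_and] at hk ⊢
    rw [isProjectiveArr_iff_moveToFront, hfront, hinsert]
    exact ⟨⟨hσ.1, hk⟩, rfl⟩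
  · intro π hπ
    simp only [coe_filter, Set.mem_ofPred_eq] at hπ
    obtain ⟨-, rfl⟩ := hπ
    ext
    simp [moveToFront]
  · intro k _
    exact hinsert k

theorem card_projSet_s6 [NeZero n] (hT : G.IsTree) :
    #(projSet G r) = (G.degree r + 1) * #(projSet1 G r) := by
  have hmaps : Set.MapsTo (moveToFront · r) (projSet G r) (projSet1 G r) := fun π hπ => by
    rw [mem_coe, mem_projSet, isProjectiveArr_iff_moveToFront] at hπ
    exact mem_projSet1_iff.2 ⟨hπ.1, Fin.ext coe_moveToFront_self⟩
  rw [card_eq_sum_card_fiberwise hmaps, mul_comm]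
  refine sum_const_nat fun σ hσ => ?_
  obtain ⟨hp, hσr⟩ := mem_projSet1_iff.1 hσ
  have hfirst (v : Fin n) : σ r ≤ σ v := hσr ▸ Fin.zero_le _
  rw [card_moveToFront_fiber hσ, card_noEdgeSpans fun _ _ _ =>
      reachable_deleteIncidenceSet_of_le_of_le hT.connected.preconnected hp hfirst,
    hT.card_connectedComponent_deleteIncidenceSet]

end ProjectiveCount

theorem List.lt_append_cons {α : Type*} [LinearOrder α] (l m : List α) (a : α) :
    l < l ++ a :: m := by
  simpa using List.Lex.append_left (· < ·) (List.Lex.nil (a := a) (l := m)) l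

theorem List.append_lt_of_lt_of_lt_append_singleton {α : Type*} [LinearOrder α] {l m : List α}
    {a : α} (h₁ : l < m) (h₂ : m < l ++ [a]) (e : List α) : m ++ e < l ++ [a] := by
  induction l generalizing m with
  | nil =>
    obtain _ | ⟨c, m⟩ := m
    · exact absurd h₁ (List.not_lt_nil _)
    · rcases List.cons_lt_cons_iff.1 h₂ with hc | ⟨-, hm⟩
      · exact List.cons_lt_cons_iff.2 (Or.inl hc)
      · exact absurd hm (List.not_lt_nil _)
  | cons b l ih =>
    obtain _ | ⟨c, m⟩ := m
    · exact absurd h₁ (List.not_lt_nil _)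
    · rcases List.cons_lt_cons_iff.1 h₁ with hbc | ⟨rfl, hlm⟩
      · rcases List.cons_lt_cons_iff.1 h₂ with hcb | ⟨rfl, -⟩
        · exact absurd (hbc.trans hcb) (lt_irrefl _)
        · exact absurd hbc (lt_irrefl _)
      · rcases List.cons_lt_cons_iff.1 h₂ with hcb | ⟨-, hm⟩
        · exact absurd hcb (lt_irrefl _)
        · exact List.cons_lt_cons_iff.2 (Or.inr ⟨rfl, ih hlm hm⟩)

theorem exists_perm_lt_iff {n : ℕ} {α : Type*} [LinearOrder α] (f : Fin n → α)
    (hf : Function.Injective f) :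
    ∃ σ : Equiv.Perm (Fin n), ∀ a b, σ a < σ b ↔ f a < f b := by
  have hmono : StrictMono (f ∘ Tuple.sort f) :=
    (Tuple.monotone_sort f).strictMono_of_injective (hf.comp (Tuple.sort f).injective)
  refine ⟨(Tuple.sort f).symm, fun a b => ?_⟩
  simpa using (hmono.lt_iff_lt (a := (Tuple.sort f).symm a) (b := (Tuple.sort f).symm b)).symm

namespace SimpleGraph.IsTree

variable {V : Type*} {G : SimpleGraph V} (hT : G.IsTree) {r : V}

noncomputable def pathSupport (r v : V) : List V :=
  (hT.existsUnique_path r v).exists.choose.support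

theorem pathSupport_eq {v : V} {p : G.Walk r v} (hp : p.IsPath) :
    hT.pathSupport r v = p.support := by
  have hunique := hT.existsUnique_path r v
  rw [pathSupport, hunique.unique hunique.exists.choose_spec hp]

theorem pathSupport_self : hT.pathSupport r r = [r] :=
  hT.pathSupport_eq Walk.IsPath.nil

theorem exists_pathSupport_eq_cons (v : V) : ∃ l, hT.pathSupport r v = r :: l :=
  ⟨_, (Walk.cons_tail_support _).symm⟩

theorem pathSupport_injective : Function.Injective (hT.pathSupport r) := by
  intro a b h
  have hlast (v : V) : (hT.pathSupport r v).getLast? = some v := by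
    rw [pathSupport, List.getLast?_eq_some_getLast (Walk.support_ne_nil _), Walk.getLast_support]
  simpa [h, hlast] using (hlast a).symm

theorem pathSupport_adj {u v : V} (h : G.Adj u v) :
    hT.pathSupport r v = hT.pathSupport r u ++ [v] ∨
      hT.pathSupport r u = hT.pathSupport r v ++ [u] := by
  obtain ⟨p, hp, -⟩ := hT.existsUnique_path r u
  obtain ⟨q, hq, -⟩ := hT.existsUnique_path r v
  rw [hT.pathSupport_eq hp, hT.pathSupport_eq hq]
  by_cases hu : u ∈ q.support
  · rw [hT.isAcyclic.path_concat hp hq h hu, Walk.support_concat]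
    exact Or.inl rfl
  · have hv := hT.isAcyclic.mem_support_of_ne_mem_support_of_adj_of_isPath hp hq h hu
    rw [hT.isAcyclic.path_concat hq hp h.symm hv, Walk.support_concat]
    exact Or.inr rfl

end SimpleGraph.IsTree

section Existence

variable {n : ℕ} {G : SimpleGraph (Fin n)} {r : Fin n} {σ : Equiv.Perm (Fin n)}

theorem isPlanarArr_of_lt_iff_pathSupport_lt (hT : G.IsTree)
    (hσ : ∀ a b, σ a < σ b ↔ hT.pathSupport r a < hT.pathSupport r b) :
    IsPlanarArr G σ := by
  have hchild {a b : Fin n} (hab : G.Adj a b) (hlt : hT.pathSupport r a < hT.pathSupport r b) :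
      hT.pathSupport r b = hT.pathSupport r a ++ [b] :=
    (hT.pathSupport_adj hab).resolve_right fun h =>
      lt_asymm hlt (h ▸ List.lt_append_cons (hT.pathSupport r b) [] a)
  rintro s t u v hst huv ⟨hsu, hut, htv⟩
  rw [hσ] at hsu hut htv
  have ht := hchild hst (hsu.trans hut)
  rw [ht] at hut htv
  rw [hchild huv (hut.trans htv)] at htv
  exact lt_asymm htv (List.append_lt_of_lt_of_lt_append_singleton hsu hut _)

theorem projSet1_nonempty [NeZero n] (hT : G.IsTree) (r : Fin n) : (projSet1 G r).Nonempty := by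
  obtain ⟨σ, hσ⟩ := exists_perm_lt_iff (hT.pathSupport r) hT.pathSupport_injective
  have hfirst (v : Fin n) : σ r ≤ σ v := by
    rcases eq_or_ne v r with rfl | hv
    · exact le_rfl
    obtain ⟨l, hl⟩ := hT.exists_pathSupport_eq_cons (r := r) v
    obtain _ | ⟨a, l⟩ := l
    · exact absurd (hT.pathSupport_injective (hl.trans hT.pathSupport_self.symm)) hv
    · refine ((hσ r v).2 ?_).le
      rw [hT.pathSupport_self, hl]
      exact List.lt_append_cons [r] l a
  refine ⟨σ, mem_projSet1_iff.2 ⟨isPlanarArr_of_lt_iff_pathSupport_lt hT hσ, ?_⟩⟩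
  exact le_antisymm (by simpa using hfirst (σ.symm 0)) (Fin.zero_le _)

end Existence

/-- The ratio of the number of planar arrangements of `T` to the number of projective
arrangements of `T^r` is `n / (deg r + 1)`; hence planar arrangements are at least as
numerous, with equality iff `T` is a star with hub `r`. -/
theorem planar_proj_ratio (n : ℕ) (G : SimpleGraph (Fin n)) (hT : G.IsTree) (r : Fin n) :
    ((planarSet G).card : ℚ) / ((projSet G r).card : ℚ)
      = (n : ℚ) / ((G.degree r : ℚ) + 1) ∧
    (projSet G r).card ≤ (planarSet G).card ∧
    ((planarSet G).card = (projSet G r).card ↔ G.degree r = n - 1) := by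
  have : NeZero n := ⟨(Fin.pos r).ne'⟩
  have hfirst : 0 < #(projSet1 G r) := (projSet1_nonempty hT r).card_pos
  have hdeg : G.degree r + 1 ≤ n := by simpa using G.degree_lt_card_verts r
  rw [card_planarSet r, card_projSet_s6 hT]
  refine ⟨?_, Nat.mul_le_mul_right _ hdeg, ?_⟩
  · push_cast
    exact mul_div_mul_right _ _ (by positivity)
  · rw [Nat.mul_left_inj hfirst.ne']
    omega
end
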